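/- arXiv:1704.04416 — 4 statements merged into one kernel-verified Lean document; each statement's English description precedes it below -/
import Mathlib

section
/- Every network of opponent-coordinating agents under the imitation update rule is A-coordinating: if y,z are strategy vectors with (y_i = A ⟹ z_i = A for all i), and under y the set of strategies earning maximum payoff in the closed neighborhood of agent i is {A}, then under z it is also {A}; moreover if under y it is {A,B}, then under z it contains A. -/
open Finset

/-- Total payoff of agent `i` at state `x` (`true` = A, `false` = B). -/
noncomputable def pay {n : ℕ} (G : SimpleGraph (Fin n)) [DecidableRel G.Adj]
    (a b c d : Fin n → ℝ) (x : Fin n → Bool) (i : Fin n) : ℝ :=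
  ∑ j ∈ G.neighborFinset i,
    (if x i then (if x j then a i else b i) else (if x j then c i else d i))

/-- Closed neighborhood of `i`. -/
def cn {n : ℕ} (G : SimpleGraph (Fin n)) [DecidableRel G.Adj] (i : Fin n) : Finset (Fin n) :=
  insert i (G.neighborFinset i)

/-- The set of strategies earning maximal payoff `u` in the closed neighborhood of `i`. -/
def SMset {n : ℕ} (G : SimpleGraph (Fin n)) [DecidableRel G.Adj]
    (u : Fin n → ℝ) (x : Fin n → Bool) (i : Fin n) : Set Bool :=
  {s | ∃ j ∈ cn G i, x j = s ∧ ∀ r ∈ cn G i, u r ≤ u j}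

open Classical in
/-- Imitation update: adopt the strategy of the highest earner in the closed
neighborhood; keep the current strategy on ties. -/
noncomputable def imNext {n : ℕ} (G : SimpleGraph (Fin n)) [DecidableRel G.Adj]
    (u : Fin n → ℝ) (x : Fin n → Bool) (i : Fin n) : Bool :=
  if SMset G u x i = {true} then true
  else if SMset G u x i = {false} then false
  else x i

/-- Opponent-coordinating payoff matrices: `a i > b i` and `d i > c i`. -/
def OppCoord {n : ℕ} (a b c d : Fin n → ℝ) : Prop := ∀ i, b i < a i ∧ c i < d i

/-- Payoffs when a uniform reward `r` is given for each game played with strategy A. -/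
noncomputable def payR {n : ℕ} (G : SimpleGraph (Fin n)) [DecidableRel G.Adj]
    (a b c d : Fin n → ℝ) (r : ℝ) (x : Fin n → Bool) (i : Fin n) : ℝ :=
  pay G a b c d x i + (if x i then r * (G.degree i : ℝ) else 0)

/-- Asynchronous imitation trajectory under uniform reward `r`. -/
def ImTraj {n : ℕ} (G : SimpleGraph (Fin n)) [DecidableRel G.Adj]
    (a b c d : Fin n → ℝ) (r : ℝ) (σ : ℕ → Fin n) (x : ℕ → Fin n → Bool) : Prop :=
  ∀ k j, x (k + 1) j = if j = σ k then imNext G (payR G a b c d r (x k)) (x k) j else x k j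

def ImEquilib {n : ℕ} (G : SimpleGraph (Fin n)) [DecidableRel G.Adj]
    (a b c d : Fin n → ℝ) (x : Fin n → Bool) : Prop :=
  ∀ i, imNext G (pay G a b c d x) x i = x i

/-- Number of neighbors of `i` playing A at state `x0`. -/
def nA {n : ℕ} (G : SimpleGraph (Fin n)) [DecidableRel G.Adj]
    (x0 : Fin n → Bool) (i : Fin n) : ℕ :=
  ((G.neighborFinset i).filter (fun j => x0 j = true)).card

/-- Possible payoffs of agent `i` while playing A, given no A→B switches. -/
def PiA {n : ℕ} (G : SimpleGraph (Fin n)) [DecidableRel G.Adj]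
    (a b : Fin n → ℝ) (x0 : Fin n → Bool) (i : Fin n) : Set ℝ :=
  {v | ∃ δ : ℕ, δ ≤ G.degree i - nA G x0 i ∧
    v = a i * ((nA G x0 i + δ : ℕ) : ℝ) + b i * ((G.degree i - nA G x0 i - δ : ℕ) : ℝ)}

/-- Possible payoffs of agent `i` while playing B, given no A→B switches. -/
def PiB {n : ℕ} (G : SimpleGraph (Fin n)) [DecidableRel G.Adj]
    (c d : Fin n → ℝ) (x0 : Fin n → Bool) (i : Fin n) : Set ℝ :=
  {v | ∃ δ : ℕ, δ ≤ G.degree i - nA G x0 i ∧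
    v = c i * ((nA G x0 i + δ : ℕ) : ℝ) + d i * ((G.degree i - nA G x0 i - δ : ℕ) : ℝ)}

lemma payA_mono {n : ℕ} (G : SimpleGraph (Fin n)) [DecidableRel G.Adj]
    (a b c d : Fin n → ℝ) (hopp : OppCoord a b c d)
    (y z : Fin n → Bool) (hyz : ∀ i, y i = true → z i = true)
    (j : Fin n) (hj : y j = true) :
    pay G a b c d y j ≤ pay G a b c d z j := by
  unfold pay
  apply Finset.sum_le_sum
  intro k _
  rw [hj, hyz j hj]
  simp only [if_pos rfl]
  cases hk : y k with
  | true => rw [hyz k hk]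
  | false =>
    simp only [if_neg Bool.false_ne_true]
    cases hz : z k
    · simp
    · simp [le_of_lt (hopp j).1]

lemma payB_anti {n : ℕ} (G : SimpleGraph (Fin n)) [DecidableRel G.Adj]
    (a b c d : Fin n → ℝ) (hopp : OppCoord a b c d)
    (y z : Fin n → Bool) (hyz : ∀ i, y i = true → z i = true)
    (j : Fin n) (hjz : z j = false) (hjy : y j = false) :
    pay G a b c d z j ≤ pay G a b c d y j := by
  unfold pay
  apply Finset.sum_le_sum
  intro k _
  rw [hjz, hjy]
  simp only [if_neg Bool.false_ne_true]
  cases hk : z k with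
  | true =>
    cases hy : y k
    · simp [le_of_lt (hopp j).2]
    · simp
  | false =>
    have : y k = false := by
      cases hy : y k
      · rfl
      · rw [hyz k hy] at hk; exact hk
    rw [this]

/-- Every network of opponent-coordinating agents under the imitation update
rule is A-coordinating. -/
theorem stmt6 {n : ℕ} (G : SimpleGraph (Fin n)) [DecidableRel G.Adj]
    (a b c d : Fin n → ℝ) (hopp : OppCoord a b c d)
    (y z : Fin n → Bool) (hyz : ∀ i, y i = true → z i = true) (i : Fin n) :
    (SMset G (pay G a b c d y) y i = {true} → SMset G (pay G a b c d z) z i = {true}) ∧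
    (SMset G (pay G a b c d y) y i = {true, false} →
      true ∈ SMset G (pay G a b c d z) z i) := by
  have hB : ∀ r, z r = false → y r = false := by
    intro r hr
    cases hy : y r
    · rfl
    · rw [hyz r hy] at hr; exact hr
  have hne : (cn G i).Nonempty := ⟨i, Finset.mem_insert_self _ _⟩
  obtain ⟨m, hm, hmax⟩ := (cn G i).exists_max_image (pay G a b c d z) hne
  constructor
  · intro h
    have htrue : true ∈ SMset G (pay G a b c d y) y i := by
      rw [h]; rfl
    obtain ⟨j, hjcn, hjy, hjmax⟩ := htrue
    have hstrict : ∀ r ∈ cn G i, y r = false →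
        pay G a b c d y r < pay G a b c d y j := by
      intro r hr hry
      rcases lt_or_eq_of_le (hjmax r hr) with hlt | heq
      · exact hlt
      · exfalso
        have hf : false ∈ SMset G (pay G a b c d y) y i :=
          ⟨r, hr, hry, fun s hs => by rw [heq]; exact hjmax s hs⟩
        rw [h] at hf
        simp at hf
    ext s
    simp only [Set.mem_singleton_iff]
    constructor
    · rintro ⟨r, hr, hrz, hrmax⟩
      by_contra hs
      have hrz' : z r = false := by cases s <;> simp_all
      have hyr : y r = false := hB r hrz'
      have h1 : pay G a b c d z j ≤ pay G a b c d z r := hrmax j hjcn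
      have h2 : pay G a b c d z r ≤ pay G a b c d y r :=
        payB_anti G a b c d hopp y z hyz r hrz' hyr
      have h3 : pay G a b c d y r < pay G a b c d y j := hstrict r hr hyr
      have h4 : pay G a b c d y j ≤ pay G a b c d z j :=
        payA_mono G a b c d hopp y z hyz j hjy
      linarith
    · rintro rfl
      cases hzm : z m with
      | true => exact ⟨m, hm, hzm, hmax⟩
      | false =>
        exfalso
        have hym : y m = false := hB m hzm
        have h1 : pay G a b c d z j ≤ pay G a b c d z m := hmax j hjcn
        have h2 : pay G a b c d z m ≤ pay G a b c d y m :=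
          payB_anti G a b c d hopp y z hyz m hzm hym
        have h3 : pay G a b c d y m < pay G a b c d y j := hstrict m hm hym
        have h4 : pay G a b c d y j ≤ pay G a b c d z j :=
          payA_mono G a b c d hopp y z hyz j hjy
        linarith
  · intro h
    have htrue : true ∈ SMset G (pay G a b c d y) y i := by
      rw [h]; exact Set.mem_insert _ _
    obtain ⟨j, hjcn, hjy, hjmax⟩ := htrue
    cases hzm : z m with
    | true => exact ⟨m, hm, hzm, hmax⟩
    | false =>
      have hym : y m = false := hB m hzm
      refine ⟨j, hjcn, hyz j hjy, fun r hr => ?_⟩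
      have h1 : pay G a b c d z r ≤ pay G a b c d z m := hmax r hr
      have h2 : pay G a b c d z m ≤ pay G a b c d y m :=
        payB_anti G a b c d hopp y z hyz m hzm hym
      have h3 : pay G a b c d y m ≤ pay G a b c d y j := hjmax m hm
      have h4 : pay G a b c d y j ≤ pay G a b c d z j :=
        payA_mono G a b c d hopp y z hyz j hjy
      linarith
end

section
/- For a network of opponent-coordinating agents under asynchronous imitation dynamics, offering uniform reward r₀ for playing A from an equilibrium state is monotone in r₀: if reward q > p ≥ 0 and an initially B-playing agent i does not eventually switch to A under reward q, then agent i also does not eventually switch to A under reward p. -/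
open Finset

/-- Every agent activates infinitely often. -/
def InfAct {n : ℕ} (σ : ℕ → Fin n) : Prop := ∀ i k, ∃ k', k ≤ k' ∧ σ k' = i

set_option linter.unusedSectionVars false
set_option linter.unusedVariables false

section Aux
variable {n : ℕ} (G : SimpleGraph (Fin n)) [DecidableRel G.Adj] (a b c d : Fin n → ℝ)

lemma mem_cn_self (i : Fin n) : i ∈ cn G i := Finset.mem_insert_self _ _

lemma exists_max_cn (u : Fin n → ℝ) (i : Fin n) :
    ∃ m ∈ cn G i, ∀ r ∈ cn G i, u r ≤ u m :=
  Finset.exists_max_image (cn G i) u ⟨i, mem_cn_self G i⟩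

lemma pay_mono_A {x y : Fin n → Bool} (hxy : ∀ j, x j = true → y j = true)
    {m : Fin n} (hbm : b m ≤ a m) (hxm : x m = true) (hym : y m = true) :
    pay G a b c d x m ≤ pay G a b c d y m := by
  unfold pay
  simp only [hxm, hym, if_true]
  apply Finset.sum_le_sum
  intro j _
  cases hj : x j with
  | true => simp [hxy j hj]
  | false => cases hyj : y j <;> simp [hbm]

lemma pay_anti_B {x y : Fin n → Bool} (hxy : ∀ j, x j = true → y j = true)
    {m : Fin n} (hcm : c m ≤ d m) (hxm : x m = false) (hym : y m = false) :
    pay G a b c d y m ≤ pay G a b c d x m := by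
  unfold pay
  simp only [hxm, hym, if_neg, Bool.false_eq_true, not_false_iff]
  apply Finset.sum_le_sum
  intro j _
  cases hj : x j with
  | true => simp [hxy j hj]
  | false => cases hyj : y j <;> simp [hcm]

lemma payR_B {r : ℝ} {x : Fin n → Bool} {m : Fin n} (hxm : x m = false) :
    payR G a b c d r x m = pay G a b c d x m := by
  simp [payR, hxm]

lemma payR_A {r : ℝ} {x : Fin n → Bool} {m : Fin n} (hxm : x m = true) :
    payR G a b c d r x m = pay G a b c d x m + r * (G.degree m : ℝ) := by
  simp [payR, hxm]

/-- A witness A-player weakly dominating all B-players puts `true` into `SMset`. -/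
lemma true_mem_SMset_of_witness {u : Fin n → ℝ} {x : Fin n → Bool} {i : Fin n}
    (h : ∃ m ∈ cn G i, x m = true ∧ ∀ t ∈ cn G i, x t = false → u t ≤ u m) :
    true ∈ SMset G u x i := by
  obtain ⟨m, hm, hxm, hdom⟩ := h
  obtain ⟨m', hm', hmax⟩ := exists_max_cn G u i
  cases hxm' : x m' with
  | true => exact ⟨m', hm', hxm', hmax⟩
  | false =>
      refine ⟨m, hm, hxm, fun r hr => ?_⟩
      exact le_trans (hmax r hr) (hdom m' hm' hxm')

/-- A strictly dominating A-player forces `SMset = {true}`. -/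
lemma SMset_eq_true_of_strict {u : Fin n → ℝ} {x : Fin n → Bool} {i : Fin n}
    (h : ∃ m ∈ cn G i, x m = true ∧ ∀ t ∈ cn G i, x t = false → u t < u m) :
    SMset G u x i = {true} := by
  obtain ⟨m, hm, hxm, hdom⟩ := h
  obtain ⟨m', hm', hmax⟩ := exists_max_cn G u i
  have hxm' : x m' = true := by
    cases hxm'' : x m' with
    | true => rfl
    | false => exact absurd (hmax m hm) (not_le.mpr (hdom m' hm' hxm''))
  ext s
  constructor
  · rintro ⟨j, hj, hxj, hjmax⟩
    cases hxj' : x j with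
    | true => simp [← hxj, hxj']
    | false => exact absurd (hjmax m hm) (not_le.mpr (hdom j hj hxj'))
  · rintro rfl
    exact ⟨m', hm', hxm', hmax⟩

lemma imNext_eq_true_of_true_mem {u : Fin n → ℝ} {x : Fin n → Bool} {i : Fin n}
    (h : true ∈ SMset G u x i) (hx : x i = true) : imNext G u x i = true := by
  unfold imNext
  split
  · rfl
  · split
    · next heq => rw [heq] at h; simp at h
    · exact hx

lemma SMset_eq_true_of_flip {u : Fin n → ℝ} {x : Fin n → Bool} {i : Fin n}
    (hx : x i = false) (h : imNext G u x i = true) : SMset G u x i = {true} := by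
  unfold imNext at h
  by_contra hne
  rw [if_neg hne] at h
  split at h
  · simp at h
  · rw [hx] at h; simp at h

end Aux

section Inv
variable {n : ℕ} (G : SimpleGraph (Fin n)) [DecidableRel G.Adj] (a b c d : Fin n → ℝ) (r : ℝ)

/-- Invariant: every A-player has an A-player in its closed neighborhood whose
payoff weakly dominates every B-player there. -/
def InvI (x : Fin n → Bool) : Prop :=
  ∀ j, x j = true → ∃ m ∈ cn G j, x m = true ∧
    ∀ t ∈ cn G j, x t = false → payR G a b c d r x t ≤ payR G a b c d r x m

variable (hopp : OppCoord a b c d) (hr : 0 ≤ r)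

include hopp hr in
/-- The invariant holds at an (unrewarded) equilibrium, for any reward `r ≥ 0`. -/
lemma inv_of_equilib {x0 : Fin n → Bool}
    (heq : ∀ i, imNext G (pay G a b c d x0) x0 i = x0 i) :
    InvI G a b c d r x0 := by
  intro j hj
  by_cases hA : ∃ m ∈ cn G j, x0 m = true ∧
      ∀ t ∈ cn G j, pay G a b c d x0 t ≤ pay G a b c d x0 m
  · obtain ⟨m, hm, hxm, hmax⟩ := hA
    refine ⟨m, hm, hxm, fun t ht hxt => ?_⟩
    rw [payR_B G a b c d hxt, payR_A G a b c d hxm]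
    have : (0:ℝ) ≤ r * (G.degree m : ℝ) := mul_nonneg hr (Nat.cast_nonneg _)
    linarith [hmax t ht]
  · exfalso
    obtain ⟨m', hm', hmax⟩ := exists_max_cn G (pay G a b c d x0) j
    have hxm' : x0 m' = false := by
      cases hx : x0 m' with
      | true => exact absurd ⟨m', hm', hx, hmax⟩ hA
      | false => rfl
    have hSM : SMset G (pay G a b c d x0) x0 j = {false} := by
      ext s
      constructor
      · rintro ⟨j', hj', hxj', hjmax⟩
        cases hx : x0 j' with
        | true => exact absurd ⟨j', hj', hx, hjmax⟩ hA
        | false => simp [← hxj', hx]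
      · rintro rfl
        exact ⟨m', hm', hxm', hmax⟩
    have := heq j
    unfold imNext at this
    rw [if_neg (by rw [hSM]; intro h; simpa using congrArg (true ∈ ·) h.symm),
        if_pos hSM] at this
    rw [hj] at this
    exact Bool.false_ne_true this

include hopp hr in
/-- One asynchronous update preserves the invariant and makes no A→B switch. -/
lemma inv_step {x x' : Fin n → Bool} (hinv : InvI G a b c d r x) (s : Fin n)
    (hup : ∀ j, x' j = if j = s then imNext G (payR G a b c d r x) x j else x j) :
    (∀ j, x j = true → x' j = true) ∧ InvI G a b c d r x' := by
  have hsame : ∀ j, j ≠ s → x' j = x j := fun j hj => by rw [hup j, if_neg hj]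
  by_cases hxs : x s = true
  · -- an A-player never switches given the invariant
    have hmem : true ∈ SMset G (payR G a b c d r x) x s :=
      true_mem_SMset_of_witness G (hinv s hxs)
    have hx' : x' = x := by
      funext j
      rw [hup j]
      split
      · next h => subst h; rw [imNext_eq_true_of_true_mem G hmem hxs, hxs]
      · rfl
    rw [hx']
    exact ⟨fun j hj => hj, hinv⟩
  · have hxs' : x s = false := Bool.eq_false_iff.mpr hxs
    by_cases hflip : imNext G (payR G a b c d r x) x s = true
    · -- s flips from B to A
      have hx's : x' s = true := by rw [hup s, if_pos rfl]; exact hflip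
      have hmono : ∀ j, x j = true → x' j = true := by
        intro j hj
        rcases eq_or_ne j s with rfl | hne
        · exact hx's
        · rw [hsame j hne]; exact hj
      have hBB : ∀ t, x' t = false → x t = false := by
        intro t ht
        cases hx : x t with
        | true => rw [hmono t hx] at ht; exact absurd ht (by simp)
        | false => rfl
      -- payoff comparisons
      have hpayA : ∀ m, x m = true →
          payR G a b c d r x m ≤ payR G a b c d r x' m := by
        intro m hm
        rw [payR_A G a b c d hm, payR_A G a b c d (hmono m hm)]
        have := pay_mono_A G a b c d hmono (le_of_lt (hopp m).1) hm (hmono m hm)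
        linarith
      have hpayB : ∀ t, x' t = false →
          payR G a b c d r x' t ≤ payR G a b c d r x t := by
        intro t ht
        rw [payR_B G a b c d ht, payR_B G a b c d (hBB t ht)]
        exact pay_anti_B G a b c d hmono (le_of_lt (hopp t).2) (hBB t ht) ht
      refine ⟨hmono, fun j hj => ?_⟩
      have key : ∃ m ∈ cn G j, x m = true ∧
          ∀ t ∈ cn G j, x t = false → payR G a b c d r x t ≤ payR G a b c d r x m := by
        cases hxj : x j with
        | true => exact hinv j hxj
        | false =>
            have hjs : j = s := by
              by_contra hne
              rw [hsame j hne, hxj] at hj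
              exact Bool.false_ne_true hj
            subst hjs
            have hSM := SMset_eq_true_of_flip G hxs' hflip
            have : true ∈ SMset G (payR G a b c d r x) x j := by rw [hSM]; rfl
            obtain ⟨m, hm, hxm, hmax⟩ := this
            exact ⟨m, hm, hxm, fun t ht _ => hmax t ht⟩
      obtain ⟨m, hm, hxm, hdom⟩ := key
      refine ⟨m, hm, hmono m hxm, fun t ht hxt => ?_⟩
      calc payR G a b c d r x' t ≤ payR G a b c d r x t := hpayB t hxt
        _ ≤ payR G a b c d r x m := hdom t ht (hBB t hxt)
        _ ≤ payR G a b c d r x' m := hpayA m hxm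
    · -- no flip: state unchanged
      have hx' : x' = x := by
        funext j
        rw [hup j]
        split
        · next h =>
            subst h
            rw [Bool.eq_false_iff.mpr hflip, hxs']
        · rfl
      rw [hx']
      exact ⟨fun j hj => hj, hinv⟩

end Inv

theorem stmt8' {n : ℕ} (G : SimpleGraph (Fin n)) [DecidableRel G.Adj]
    (a b c d : Fin n → ℝ) (hopp : OppCoord a b c d)
    (x0 : Fin n → Bool) (heq : ∀ i, imNext G (pay G a b c d x0) x0 i = x0 i)
    (p q : ℝ) (hp : 0 ≤ p) (hpq : p < q)
    (σq σp : ℕ → Fin n) (hσq : ∀ i k, ∃ k', k ≤ k' ∧ σq k' = i)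
    (xq xp : ℕ → Fin n → Bool) (hq0 : xq 0 = x0) (hp0 : xp 0 = x0)
    (htq : ∀ k j, xq (k + 1) j =
      if j = σq k then imNext G (payR G a b c d q (xq k)) (xq k) j else xq k j)
    (htp : ∀ k j, xp (k + 1) j =
      if j = σp k then imNext G (payR G a b c d p (xp k)) (xp k) j else xp k j)
    (i : Fin n) (hiB : x0 i = false)
    (hnoq : ¬ ∃ k, xq k i = true) :
    ¬ ∃ k, xp k i = true := by
  classical
  have hq : (0:ℝ) ≤ q := le_trans hp (le_of_lt hpq)
  -- Step 1 : the q-trajectory is A-monotone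
  have hinv : ∀ k, InvI G a b c d q (xq k) := by
    intro k
    induction k with
    | zero => rw [hq0]; exact inv_of_equilib G a b c d q hopp hq heq
    | succ k ih => exact (inv_step G a b c d q hopp hq ih (σq k) (htq k)).2
  have hmono : ∀ k j, xq k j = true → xq (k + 1) j = true :=
    fun k => (inv_step G a b c d q hopp hq (hinv k) (σq k) (htq k)).1
  have hpersist : ∀ j k k', k ≤ k' → xq k j = true → xq k' j = true := by
    intro j k k' hk hj
    induction k' , hk using Nat.le_induction with
    | base => exact hj
    | succ k' _ ih => exact hmono k' j ih
  -- Step 2 : the q-trajectory converges to a fixed point `xinf`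
  set xinf : Fin n → Bool := fun j => if ∃ k, xq k j = true then true else false with hxinf
  have hxinf_true : ∀ j, xinf j = true ↔ ∃ k, xq k j = true := by
    intro j
    by_cases h : ∃ k, xq k j = true <;> simp [hxinf, h]
  set g : Fin n → ℕ := fun j => if h : ∃ k, xq k j = true then h.choose else 0 with hg
  set K : ℕ := Finset.univ.sup g with hKdef
  have hK : ∀ k, K ≤ k → xq k = xinf := by
    intro k hk
    funext j
    by_cases h : ∃ k, xq k j = true
    · have h1 : xq (g j) j = true := by rw [hg]; simpa [dif_pos h] using h.choose_spec
      have h2 : g j ≤ k := le_trans (Finset.le_sup (Finset.mem_univ j)) hk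
      rw [hpersist j (g j) k h2 h1, (hxinf_true j).mpr h]
    · have h1 : xq k j = false := by
        cases hx : xq k j with
        | true => exact absurd ⟨k, hx⟩ h
        | false => rfl
      rw [h1]
      cases hx : xinf j with
      | true => exact absurd ((hxinf_true j).mp hx) h
      | false => rfl
  have hfix : ∀ j, imNext G (payR G a b c d q xinf) xinf j = xinf j := by
    intro j
    obtain ⟨k', hk', hσ⟩ := hσq j K
    have h1 := htq k' j
    rw [if_pos hσ.symm, hK k' hk', hK (k' + 1) (le_trans hk' (Nat.le_succ _))] at h1
    exact h1.symm
  have hxinfi : xinf i = false := by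
    cases hx : xinf i with
    | true => exact absurd ((hxinf_true i).mp hx) hnoq
    | false => rfl
  -- Step 3 : coupling — the p-trajectory stays below `xinf`
  have claim : ∀ k j, xp k j = true → xinf j = true := by
    intro k
    induction k with
    | zero =>
        intro j hj
        rw [hp0] at hj
        exact (hxinf_true j).mpr ⟨0, by rw [hq0]; exact hj⟩
    | succ k ih =>
        intro j hj
        rw [htp k j] at hj
        by_cases hjs : j = σp k
        swap
        · rw [if_neg hjs] at hj; exact ih j hj
        rw [if_pos hjs] at hj
        cases hxp : xp k j with
        | true => exact ih j hxp
        | false =>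
          by_contra hinfj
          have hinfj' : xinf j = false := Bool.eq_false_iff.mpr hinfj
          -- the flip under reward p gives a dominating A-player m
          have hSM := SMset_eq_true_of_flip G hxp hj
          have hmem : true ∈ SMset G (payR G a b c d p (xp k)) (xp k) j := by
            rw [hSM]; rfl
          obtain ⟨m, hm, hxm, hmax⟩ := hmem
          have hxinfm : xinf m = true := ih m hxm
          have hms : m ≠ j := fun h => by rw [h, hxp] at hxm; exact Bool.false_ne_true hxm
          have hadj : G.Adj j m := by
            rcases Finset.mem_insert.mp hm with h | h
            · exact absurd h hms
            · exact (SimpleGraph.mem_neighborFinset G j m).mp h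
          have hdegm : 0 < G.degree m := by
            rw [← SimpleGraph.card_neighborFinset_eq_degree]
            exact Finset.card_pos.mpr ⟨j, (SimpleGraph.mem_neighborFinset G m j).mpr hadj.symm⟩
          -- strict dominance at xinf under reward q
          have hstrict : ∀ t ∈ cn G j, xinf t = false →
              payR G a b c d q xinf t < payR G a b c d q xinf m := by
            intro t ht hxt
            have hBt : xp k t = false := by
              cases hx : xp k t with
              | true => rw [ih t hx] at hxt; exact absurd hxt (by simp)
              | false => rfl
            have h1 : payR G a b c d q xinf t ≤ payR G a b c d p (xp k) t := by
              rw [payR_B G a b c d hxt, payR_B G a b c d hBt]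
              exact pay_anti_B G a b c d ih (le_of_lt (hopp t).2) hBt hxt
            have h2 : payR G a b c d p (xp k) m < payR G a b c d q xinf m := by
              rw [payR_A G a b c d hxm, payR_A G a b c d hxinfm]
              have h3 := pay_mono_A G a b c d ih (le_of_lt (hopp m).1) hxm hxinfm
              have h4 : p * (G.degree m : ℝ) < q * (G.degree m : ℝ) :=
                mul_lt_mul_of_pos_right hpq (by exact_mod_cast hdegm)
              linarith
            calc payR G a b c d q xinf t ≤ payR G a b c d p (xp k) t := h1
              _ ≤ payR G a b c d p (xp k) m := hmax t ht
              _ < payR G a b c d q xinf m := h2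
          have hSM' : SMset G (payR G a b c d q xinf) xinf j = {true} :=
            SMset_eq_true_of_strict G ⟨m, hm, hxinfm, hstrict⟩
          have := hfix j
          unfold imNext at this
          rw [if_pos hSM', hinfj'] at this
          exact absurd this (by simp)
  rintro ⟨k, hk⟩
  rw [claim k i hk] at hxinfi
  exact absurd hxinfi (by simp)

/-- Uniform-reward control is monotone in the reward: if an initially
B-playing agent does not eventually switch to A under reward `q > p ≥ 0`, then it also
does not switch to A under reward `p`. -/
theorem stmt8 {n : ℕ} (G : SimpleGraph (Fin n)) [DecidableRel G.Adj]
    (a b c d : Fin n → ℝ) (hopp : OppCoord a b c d)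
    (x0 : Fin n → Bool) (heq : ImEquilib G a b c d x0)
    (p q : ℝ) (hp : 0 ≤ p) (hpq : p < q)
    (σq σp : ℕ → Fin n) (hσq : InfAct σq) (hσp : InfAct σp)
    (xq xp : ℕ → Fin n → Bool) (hq0 : xq 0 = x0) (hp0 : xp 0 = x0)
    (htq : ImTraj G a b c d q σq xq) (htp : ImTraj G a b c d p σp xp)
    (i : Fin n) (hiB : x0 i = false)
    (hnoq : ¬ ∃ k, xq k i = true) :
    ¬ ∃ k, xp k i = true := stmt8' G a b c d hopp x0 heq p q hp hpq σq σp hσq xq xp hq0 hp0 htq htp i hiB hnoq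
end

section
/- Consider an A-coordinating network game at equilibrium at time 0 with incentives applied, and two activation sequences S¹ = {i⁰, i¹, ...} and S² = {j⁰, j¹, ...}. Define k₀ as the first time j⁰ is active in S¹ and k_s as the first time after k_{s−1} that j^s is active in S¹ (these exist since every agent activates infinitely often). Then for all s ≥ 0: if the strategy of agent j^s at time s+1 under S² is A, then the strategy of agent j^s at time k_s + 1 under S¹ is A. -/
/-!
Order strategies by B < A. A-coordination makes the best-response update of an agent monotone
in the state, so if two trajectories of the same dynamics satisfy x² ≤ x¹ and then activate the
same agent, they still satisfy x² ≤ x¹ afterwards (the other agents do not move). Induction on s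
gives x²(s) ≤ x¹(k_s): one step activates j^s in both, giving x²(s+1) ≤ x¹(k_s+1), and
A-monotonicity of x¹ carries this up to time k_{s+1}.
-/

/-- Strategies: `true` = A, `false` = B. -/
def ACoord (n : ℕ) (f : Fin n → (Fin n → Bool) → Set Bool) : Prop :=
  ∀ y z : Fin n → Bool, (∀ i, y i = true → z i = true) →
    ∀ i, (f i y = {true} → f i z = {true}) ∧
      (f i y = {true, false} → true ∈ f i z)

/-- Each decision set is `{A}`, `{B}` or `{A,B}`. -/
def ValidRule (n : ℕ) (f : Fin n → (Fin n → Bool) → Set Bool) : Prop :=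
  ∀ i x, f i x = {true} ∨ f i x = {false} ∨ f i x = {true, false}

open Classical in
/-- The strategy adopted by an updating agent `i`; `tb i = some b` means fixed
tie-break `b`, `tb i = none` means keep current strategy on ties. -/
noncomputable def nextVal {n : ℕ} (f : Fin n → (Fin n → Bool) → Set Bool)
    (tb : Fin n → Option Bool) (x : Fin n → Bool) (i : Fin n) : Bool :=
  if f i x = {true} then true
  else if f i x = {false} then false
  else (tb i).getD (x i)

/-- Asynchronous dynamics: at time `k` the active agent `σ k` updates, others stay. -/
def Traj {n : ℕ} (f : Fin n → (Fin n → Bool) → Set Bool) (tb : Fin n → Option Bool)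
    (σ : ℕ → Fin n) (x : ℕ → Fin n → Bool) : Prop :=
  ∀ k j, x (k + 1) j = if j = σ k then nextVal f tb (x k) j else x k j

def Equilib {n : ℕ} (f : Fin n → (Fin n → Bool) → Set Bool) (tb : Fin n → Option Bool)
    (x : Fin n → Bool) : Prop :=
  ∀ i, nextVal f tb x i = x i

variable {n : ℕ} {f : Fin n → (Fin n → Bool) → Set Bool} {tb : Fin n → Option Bool}

theorem nextVal_of_eq_pair {x : Fin n → Bool} {i : Fin n} (h : f i x = {true, false}) :
    nextVal f tb x i = (tb i).getD (x i) := by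
  simp [nextVal, h, Set.ext_iff]

theorem nextVal_mono (hval : ValidRule n f) (hA : ACoord n f) (i : Fin n) :
    Monotone fun x => nextVal f tb x i := by
  intro y z hyz
  obtain ⟨hsingle, hpair⟩ := hA y z (fun j => Bool.le_iff_imp.mp (hyz j)) i
  rcases hval i y with hy | hy | hy
  · simp [nextVal, hy, hsingle hy]
  · simp [nextVal, hy, Set.ext_iff]
  · rcases hval i z with hz | hz | hz
    · simp [nextVal, hz]
    · simpa [hz] using hpair hy
    · simp only [nextVal_of_eq_pair hy, nextVal_of_eq_pair hz]
      cases tb i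
      exacts [hyz i, le_rfl]

namespace Traj

variable {σ σ₁ σ₂ : ℕ → Fin n} {x x₁ x₂ : ℕ → Fin n → Bool}

theorem apply_active (ht : Traj f tb σ x) (k : ℕ) :
    x (k + 1) (σ k) = nextVal f tb (x k) (σ k) := by
  simp [ht k]

theorem apply_of_ne_active (ht : Traj f tb σ x) {k : ℕ} {j : Fin n} (hj : j ≠ σ k) :
    x (k + 1) j = x k j := by
  simp [ht k, hj]

theorem succ_le_succ_of_active_eq (hval : ValidRule n f) (hA : ACoord n f)
    (ht₁ : Traj f tb σ₁ x₁) (ht₂ : Traj f tb σ₂ x₂) {k₁ k₂ : ℕ}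
    (hle : x₂ k₂ ≤ x₁ k₁) (hσ : σ₁ k₁ = σ₂ k₂) : x₂ (k₂ + 1) ≤ x₁ (k₁ + 1) := by
  intro j
  by_cases hj : j = σ₂ k₂
  · subst hj
    rw [ht₂.apply_active, ← hσ, ht₁.apply_active, hσ]
    exact nextVal_mono hval hA _ hle
  · rw [ht₂.apply_of_ne_active hj, ht₁.apply_of_ne_active (hσ ▸ hj)]
    exact hle j

theorem le_comp_of_active_eq (hval : ValidRule n f) (hA : ACoord n f)
    (ht₁ : Traj f tb σ₁ x₁) (ht₂ : Traj f tb σ₂ x₂) (hx₁ : Monotone x₁) (h0 : x₁ 0 = x₂ 0)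
    {κ : ℕ → ℕ} (hκ : StrictMono κ) (hσ : ∀ s, σ₁ (κ s) = σ₂ s) (s : ℕ) :
    x₂ s ≤ x₁ (κ s) := by
  induction s with
  | zero => exact h0 ▸ hx₁ (Nat.zero_le _)
  | succ s ih =>
    calc x₂ (s + 1) ≤ x₁ (κ s + 1) := succ_le_succ_of_active_eq hval hA ht₁ ht₂ ih (hσ s)
      _ ≤ x₁ (κ (s + 1)) := hx₁ (hκ s.lt_succ_self)

end Traj

theorem stmt16_general {n : ℕ} (fhat : Fin n → (Fin n → Bool) → Set Bool)
    (tbhat : Fin n → Option Bool)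
    (hvalhat : ValidRule n fhat)
    (hAhat : ACoord n fhat)
    (σ1 σ2 : ℕ → Fin n)
    (x1 x2 : ℕ → Fin n → Bool) (h0 : x1 0 = x2 0)
    (ht1 : Traj fhat tbhat σ1 x1) (ht2 : Traj fhat tbhat σ2 x2)
    (hmono : ∀ k i, x1 k i = true → x1 (k + 1) i = true)
    (kseq : ℕ → ℕ)
    (hk0 : σ1 (kseq 0) = σ2 0 ∧ ∀ t, t < kseq 0 → σ1 t ≠ σ2 0)
    (hks : ∀ s, σ1 (kseq (s + 1)) = σ2 (s + 1) ∧ kseq s < kseq (s + 1) ∧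
      ∀ t, kseq s < t → t < kseq (s + 1) → σ1 t ≠ σ2 (s + 1)) :
    ∀ s, x2 (s + 1) (σ2 s) = true → x1 (kseq s + 1) (σ2 s) = true := by
  have hx1 : Monotone x1 := monotone_nat_of_le_succ fun k i => Bool.le_iff_imp.mpr (hmono k i)
  have hkseq : StrictMono kseq := strictMono_nat_of_lt_succ fun s => (hks s).2.1
  have hσ : ∀ s, σ1 (kseq s) = σ2 s
    | 0 => hk0.1
    | s + 1 => (hks s).1
  intro s
  have hle := ht1.succ_le_succ_of_active_eq hvalhat hAhat ht2
    (ht1.le_comp_of_active_eq hvalhat hAhat ht2 hx1 h0 hkseq hσ s) (hσ s)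
  exact Bool.le_iff_imp.mp (hle (σ2 s))

/-- Lemma 3 of the paper: with `kseq s` the first time after `kseq (s-1)`
that agent `σ2 s` is active in sequence `σ1`, if agent `σ2 s` plays A at time `s+1` under
`σ2`, then it plays A at time `kseq s + 1` under `σ1`. -/
theorem stmt16 {n : ℕ} (f fhat : Fin n → (Fin n → Bool) → Set Bool)
    (tb tbhat : Fin n → Option Bool)
    (hval : ValidRule n f) (hvalhat : ValidRule n fhat)
    (hA : ACoord n f) (hAhat : ACoord n fhat)
    (hinc : ∀ i y, (true ∈ f i y → true ∈ fhat i y) ∧ (f i y = {true} → fhat i y = {true}))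
    (σ1 σ2 : ℕ → Fin n) (hσ1 : InfAct σ1) (hσ2 : InfAct σ2)
    (x1 x2 : ℕ → Fin n → Bool) (h0 : x1 0 = x2 0)
    (heq : Equilib f tb (x1 0))
    (ht1 : Traj fhat tbhat σ1 x1) (ht2 : Traj fhat tbhat σ2 x2)
    (hmono : ∀ k i, x1 k i = true → x1 (k + 1) i = true)
    (hmono2 : ∀ k i, x2 k i = true → x2 (k + 1) i = true)
    (kseq : ℕ → ℕ)
    (hk0 : σ1 (kseq 0) = σ2 0 ∧ ∀ t, t < kseq 0 → σ1 t ≠ σ2 0)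
    (hks : ∀ s, σ1 (kseq (s + 1)) = σ2 (s + 1) ∧ kseq s < kseq (s + 1) ∧
      ∀ t, kseq s < t → t < kseq (s + 1) → σ1 t ≠ σ2 (s + 1)) :
    ∀ s, x2 (s + 1) (σ2 s) = true → x1 (kseq s + 1) (σ2 s) = true :=
  stmt16_general fhat tbhat hvalhat hAhat σ1 σ2 x1 x2 h0 ht1 ht2 hmono kseq hk0 hks
end

section
/- For a network of opponent-coordinating agents under imitation dynamics with uniform reward r₀ added to A-play payoffs, starting from an equilibrium: if r₀ > max over all pairs (i,j) with i initially playing B, j a neighbor of some initially-B agent, of (y_i^B − y_j^A)/deg_j taken over y_i^B ∈ Π_i^B, y_j^A ∈ Π_j^A, and the initial state has at least one A-player in a connected graph, then the network converges to the all-A state. -/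
open Finset

section Helpers

variable {n : ℕ} (G : SimpleGraph (Fin n)) [DecidableRel G.Adj]

/-- number of A-neighbors at state y -/
def mcnt (y : Fin n → Bool) (i : Fin n) : ℕ :=
  ((G.neighborFinset i).filter (fun j => y j = true)).card

lemma mcnt_le_degree (y : Fin n → Bool) (i : Fin n) : mcnt G y i ≤ G.degree i := by
  classical
  exact Finset.card_filter_le (G.neighborFinset i) (fun j => y j = true)

lemma nA_le_mcnt (x0 y : Fin n → Bool) (hinv : ∀ i, x0 i = true → y i = true) (i : Fin n) :
    nA G x0 i ≤ mcnt G y i := by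
  classical
  apply Finset.card_le_card
  intro j hj
  simp only [Finset.mem_filter] at hj ⊢
  exact ⟨hj.1, hinv j hj.2⟩

lemma pay_eq (a b c d : Fin n → ℝ) (y : Fin n → Bool) (i : Fin n) :
    pay G a b c d y i =
      (if y i then a i else c i) * ((mcnt G y i : ℕ) : ℝ)
      + (if y i then b i else d i) * ((G.degree i - mcnt G y i : ℕ) : ℝ) := by
  classical
  have hsplit : ∀ (A B : ℝ),
      (∑ j ∈ G.neighborFinset i, (if y j then A else B))
        = A * ((mcnt G y i : ℕ) : ℝ) + B * ((G.degree i - mcnt G y i : ℕ) : ℝ) := by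
    intro A B
    rw [Finset.sum_ite, Finset.sum_const, Finset.sum_const]
    have hcard : ((G.neighborFinset i).filter (fun j => ¬ (y j = true))).card
        = G.degree i - mcnt G y i := by
      have h := Finset.card_filter_add_card_filter_not
        (s := G.neighborFinset i) (p := fun j => y j = true)
      simp only [SimpleGraph.degree, mcnt]
      omega
    rw [hcard]
    simp only [mcnt, nsmul_eq_mul]
    ring
  by_cases h : y i = true
  · simpa [pay, h] using hsplit (a i) (b i)
  · have h' : y i = false := by simpa using h
    simpa [pay, h'] using hsplit (c i) (d i)

lemma pay_mem_PiA (a b c d : Fin n → ℝ) (x0 y : Fin n → Bool)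
    (hinv : ∀ i, x0 i = true → y i = true) (j : Fin n) (hj : y j = true) :
    pay G a b c d y j ∈ PiA G a b x0 j := by
  classical
  refine ⟨mcnt G y j - nA G x0 j, ?_, ?_⟩
  · have h1 := nA_le_mcnt G x0 y hinv j
    have h2 := mcnt_le_degree G y j
    omega
  · have h1 := nA_le_mcnt G x0 y hinv j
    have h2 := mcnt_le_degree G y j
    have e1 : nA G x0 j + (mcnt G y j - nA G x0 j) = mcnt G y j := by omega
    have e2 : G.degree j - nA G x0 j - (mcnt G y j - nA G x0 j)
        = G.degree j - mcnt G y j := by omega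
    rw [pay_eq, hj, e1, e2]
    simp

lemma pay_mem_PiB (a b c d : Fin n → ℝ) (x0 y : Fin n → Bool)
    (hinv : ∀ i, x0 i = true → y i = true) (i : Fin n) (hi : y i = false) :
    pay G a b c d y i ∈ PiB G c d x0 i := by
  classical
  refine ⟨mcnt G y i - nA G x0 i, ?_, ?_⟩
  · have h1 := nA_le_mcnt G x0 y hinv i
    have h2 := mcnt_le_degree G y i
    omega
  · have h1 := nA_le_mcnt G x0 y hinv i
    have h2 := mcnt_le_degree G y i
    have e1 : nA G x0 i + (mcnt G y i - nA G x0 i) = mcnt G y i := by omega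
    have e2 : G.degree i - nA G x0 i - (mcnt G y i - nA G x0 i)
        = G.degree i - mcnt G y i := by omega
    rw [pay_eq, hi, e1, e2]
    simp

lemma cn_nonempty (v : Fin n) : (cn G v).Nonempty := ⟨v, Finset.mem_insert_self _ _⟩

lemma SM_true (u : Fin n → ℝ) (y : Fin n → Bool) (v w : Fin n)
    (hw : w ∈ cn G v) (hwt : y w = true)
    (hlt : ∀ i' ∈ cn G v, y i' = false → u i' < u w) :
    SMset G u y v = {true} := by
  classical
  obtain ⟨m, hm, hmax⟩ := Finset.exists_max_image (cn G v) u (cn_nonempty G v)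
  have hym : y m = true := by
    by_contra h
    have := hlt m hm (by simpa using h)
    exact absurd (hmax w hw) (not_le.2 this)
  ext s
  simp only [Set.mem_setOf_eq, Set.mem_singleton_iff, SMset]
  constructor
  · rintro ⟨j, hj, hjs, hjmax⟩
    by_contra hs
    have hjf : y j = false := by
      cases s
      · exact hjs
      · exact absurd rfl hs
    have := hlt j hj hjf
    exact absurd (hjmax w hw) (not_le.2 this)
  · rintro rfl
    exact ⟨m, hm, hym, hmax⟩

lemma SM_false (u : Fin n → ℝ) (y : Fin n → Bool) (v : Fin n)
    (hall : ∀ w ∈ cn G v, y w = false) :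
    SMset G u y v = {false} := by
  classical
  obtain ⟨m, hm, hmax⟩ := Finset.exists_max_image (cn G v) u (cn_nonempty G v)
  ext s
  simp only [Set.mem_setOf_eq, Set.mem_singleton_iff, SMset]
  constructor
  · rintro ⟨j, hj, hjs, -⟩
    rw [← hjs]; exact hall j hj
  · rintro rfl
    exact ⟨m, hm, hall m hm, hmax⟩

lemma imNext_of_SM_true (u : Fin n → ℝ) (y : Fin n → Bool) (v : Fin n)
    (h : SMset G u y v = {true}) : imNext G u y v = true := by
  rw [imNext, if_pos h]

lemma imNext_of_SM_false (u : Fin n → ℝ) (y : Fin n → Bool) (v : Fin n)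
    (h : SMset G u y v = {false}) : imNext G u y v = false := by
  have hne : SMset G u y v ≠ {true} := by
    rw [h]
    intro hc
    have : (false : Bool) ∈ ({true} : Set Bool) := hc ▸ rfl
    simp at this
  rw [imNext, if_neg hne, if_pos h]

/-- Key step: if the invariant holds and v's closed neighborhood contains an
A-player, then the imitation update makes v play A. -/
lemma next_true (a b c d : Fin n → ℝ) (r0 : ℝ) (x0 y : Fin n → Bool)
    (hbig : ∀ s : Fin n, x0 s = false →
      ∀ i ∈ cn G s, x0 i = false →
        ∀ j ∈ G.neighborFinset s,
          ∀ yB ∈ PiB G c d x0 i, ∀ yA ∈ PiA G a b x0 j,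
            (yB - yA) / (G.degree j : ℝ) < r0)
    (hinv : ∀ i, x0 i = true → y i = true)
    (v w : Fin n) (hw : w ∈ cn G v) (hwt : y w = true) :
    imNext G (payR G a b c d r0 y) y v = true := by
  classical
  have hinv' : ∀ i, y i = false → x0 i = false := by
    intro i hi
    by_contra h
    have : x0 i = true := by simpa using h
    rw [hinv i this] at hi; exact absurd hi (by simp)
  -- key comparison: payR of a B-player i' in cn v is less than payR of an A-player ww
  -- A-player chosen: if y v = true then v else w
  have key : ∃ ww ∈ cn G v, y ww = true ∧
      ∀ i' ∈ cn G v, y i' = false → payR G a b c d r0 y i' < payR G a b c d r0 y ww := by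
    by_cases hv : y v = true
    · refine ⟨v, Finset.mem_insert_self _ _, hv, ?_⟩
      intro i' hi' hif
      have hne : i' ≠ v := by intro h; rw [h, hv] at hif; exact absurd hif (by simp)
      have hadj : i' ∈ G.neighborFinset v := by
        rcases Finset.mem_insert.1 hi' with h | h
        · exact absurd h hne
        · exact h
      have hvadj : v ∈ G.neighborFinset i' := by
        rw [SimpleGraph.mem_neighborFinset] at hadj ⊢
        exact hadj.symm
      have hdeg : 0 < G.degree v := by
        rw [SimpleGraph.mem_neighborFinset] at hadj
        exact G.degree_pos_iff_exists_adj v |>.2 ⟨i', hadj⟩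
      have h := hbig i' (hinv' i' hif) i' (Finset.mem_insert_self _ _) (hinv' i' hif)
        v hvadj (pay G a b c d y i') (pay_mem_PiB G a b c d x0 y hinv i' hif)
        (pay G a b c d y v) (pay_mem_PiA G a b c d x0 y hinv v hv)
      have hdegR : (0:ℝ) < (G.degree v : ℝ) := by exact_mod_cast hdeg
      have := (div_lt_iff₀ hdegR).1 h
      simp only [payR, hif, hv, Bool.false_eq_true, if_true, if_false]
      linarith [this]
    · have hvf : y v = false := by simpa using hv
      have hne : w ≠ v := by intro h; rw [h, hvf] at hwt; exact absurd hwt (by simp)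
      have hwadj : w ∈ G.neighborFinset v := by
        rcases Finset.mem_insert.1 hw with h | h
        · exact absurd h hne
        · exact h
      refine ⟨w, hw, hwt, ?_⟩
      intro i' hi' hif
      have hdeg : 0 < G.degree w := by
        rw [SimpleGraph.mem_neighborFinset] at hwadj
        exact G.degree_pos_iff_exists_adj w |>.2 ⟨v, hwadj.symm⟩
      have h := hbig v (hinv' v hvf) i' hi' (hinv' i' hif)
        w hwadj (pay G a b c d y i') (pay_mem_PiB G a b c d x0 y hinv i' hif)
        (pay G a b c d y w) (pay_mem_PiA G a b c d x0 y hinv w hwt)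
      have hdegR : (0:ℝ) < (G.degree w : ℝ) := by exact_mod_cast hdeg
      have := (div_lt_iff₀ hdegR).1 h
      simp only [payR, hif, hwt, Bool.false_eq_true, if_true, if_false]
      linarith [this]
  obtain ⟨ww, hww, hwwt, hcmp⟩ := key
  exact imNext_of_SM_true G _ y v (SM_true G _ y v ww hww hwwt hcmp)

end Helpers

/-- If the uniform reward `r₀` exceeds `(y_i^B − y_j^A)/deg_j` for all
relevant pairs, and the connected network starts at an equilibrium with at least one
A-player, then the network converges to the all-A state. -/
theorem stmt19 {n : ℕ} (G : SimpleGraph (Fin n)) [DecidableRel G.Adj]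
    (hconn : G.Connected)
    (a b c d : Fin n → ℝ) (hopp : OppCoord a b c d)
    (x0 : Fin n → Bool) (heq : ImEquilib G a b c d x0)
    (hA : ∃ i, x0 i = true)
    (r0 : ℝ) (hr0 : 0 ≤ r0)
    (hbig : ∀ s : Fin n, x0 s = false →
      ∀ i ∈ cn G s, x0 i = false →
        ∀ j ∈ G.neighborFinset s,
          ∀ yB ∈ PiB G c d x0 i, ∀ yA ∈ PiA G a b x0 j,
            (yB - yA) / (G.degree j : ℝ) < r0)
    (σ : ℕ → Fin n) (hσ : InfAct σ) (x : ℕ → Fin n → Bool)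
    (hx0 : x 0 = x0) (htraj : ImTraj G a b c d r0 σ x) :
    ∃ k, ∀ i, x k i = true := by
  classical
  have hinv : ∀ k i, x0 i = true → x k i = true := by
    intro k
    induction k with
    | zero => intro i hi; rw [hx0]; exact hi
    | succ k ih =>
      intro i hi
      rw [htraj k i]
      by_cases h : i = σ k
      · rw [if_pos h]
        exact next_true G a b c d r0 x0 (x k) hbig ih i i (Finset.mem_insert_self _ _) (ih i hi)
      · rw [if_neg h]; exact ih i hi
  have hstep : ∀ k i, x k i = true → x (k+1) i = true := by
    intro k i hi
    rw [htraj k i]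
    by_cases h : i = σ k
    · rw [if_pos h]
      exact next_true G a b c d r0 x0 (x k) hbig (hinv k) i i (Finset.mem_insert_self _ _) hi
    · rw [if_neg h]; exact hi
  have hmono : ∀ k k' i, k ≤ k' → x k i = true → x k' i = true := by
    intro k k' i hkk hi
    induction hkk with
    | refl => exact hi
    | step h ih => exact hstep _ i ih
  have hadjspread : ∀ u v : Fin n, G.Adj u v → (∃ k, x k u = true) → ∃ k, x k v = true := by
    rintro u v hadj ⟨k, hk⟩
    obtain ⟨k', hkk', hσ'⟩ := hσ v k
    refine ⟨k' + 1, ?_⟩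
    rw [htraj k' v, if_pos hσ'.symm]
    exact next_true G a b c d r0 x0 (x k') hbig (hinv k') v u
      (Finset.mem_insert_of_mem (by rw [SimpleGraph.mem_neighborFinset]; exact hadj.symm))
      (hmono k k' u hkk' hk)
  have hwalk : ∀ u v : Fin n, G.Walk u v → (∃ k, x k u = true) → ∃ k, x k v = true := by
    intro u v p
    induction p with
    | nil => exact id
    | cons h p ih => intro hu; exact ih (hadjspread _ _ h hu)
  obtain ⟨i0, hi0⟩ := hA
  have hall : ∀ v, ∃ k, x k v = true := by
    intro v
    obtain ⟨p⟩ := hconn.preconnected i0 v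
    exact hwalk i0 v p ⟨0, by rw [hx0]; exact hi0⟩
  choose f hf using hall
  exact ⟨Finset.univ.sup f, fun i =>
    hmono (f i) _ i (Finset.le_sup (Finset.mem_univ i)) (hf i)⟩
end
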